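/- Suppose the presentation ⟨X|R⟩ is extra-confluent. Let w = x_1⋯x_m (with x_1,…,x_m ∈ X) be the source of a critical branching of ⟨X|R⟩. Then the length-N subword x_{m−N}⋯x_{m−1} of w is not a normal form for ⟨X|R⟩. -/

import Mathlib

open scoped TensorProduct
set_option linter.unusedSectionVars false

def altProd {A : Type*} [Monoid A] (t s : A) (k : ℕ) : A :=
  if Even k then (t * s) ^ (k / 2) else s * (t * s) ^ (k / 2)

namespace CC

variable (K : Type*) [Field K] (X : Type*) [Fintype X] [LinearOrder X]

abbrev F : Type _ := MonoidAlgebra K (FreeMonoid X)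

noncomputable def wd (w : FreeMonoid X) : F K X := MonoidAlgebra.of K (FreeMonoid X) w

def wlen (w : FreeMonoid X) : ℕ := (FreeMonoid.toList w).length

noncomputable instance : LinearOrder (FreeMonoid X) :=
  LinearOrder.lift' (fun w => FreeMonoid.toList w) (fun _ _ h => FreeMonoid.toList.injective h)

noncomputable def lm (f : F K X) : FreeMonoid X := WithBot.unbotD 1 (f.coeff.support.max)

/-- The homogeneous component `V^{⊗m} = KX^{(m)}` of `K⟨X⟩`:
elements supported on words of length `m`. -/
noncomputable def degSub (m : ℕ) : Submodule K (F K X) where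
  carrier := {f | ∀ w ∈ f.coeff.support, wlen X w = m}
  add_mem' := by
    intro a b ha hb w hw
    rcases Finset.mem_union.mp (Finsupp.support_add hw) with h | h
    · exact ha w h
    · exact hb w h
  zero_mem' := by intro w hw; simp at hw
  smul_mem' := by intro c f hf w hw; exact hf w (Finsupp.support_smul hw)

lemma mem_degSub {m : ℕ} {f : F K X} :
    f ∈ degSub K X m ↔ ∀ w ∈ f.coeff.support, wlen X w = m := Iff.rfl

/-- `l_N(2k) = kN`, `l_N(2k+1) = kN + 1`. -/
def lN (N n : ℕ) : ℕ := if Even n then (n / 2) * N else (n / 2) * N + 1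

/-- The homogeneous component `I(R)_m` of the two-sided ideal generated by `R`:
`I(R)_m = Σ_{i=0}^{m−N} V^{⊗i}·R̄·V^{⊗m−N−i}` for `m ≥ N` and `I(R)_m = 0` for `m < N`. -/
noncomputable def idealPiece (N : ℕ) (R : Set (F K X)) (m : ℕ) : Submodule K (F K X) :=
  if m < N then ⊥
  else ⨆ i ∈ Finset.range (m - N + 1),
    degSub K X i * Submodule.span K R * degSub K X (m - N - i)

/-- The two-sided ideal `I(R)` of `K⟨X⟩` generated by `R`, as a `K`-subspace. -/
noncomputable def idealSpan (R : Set (F K X)) : Submodule K (F K X) :=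
  Submodule.span K {x | ∃ u v : FreeMonoid X, ∃ g ∈ R, x = wd K X u * g * wd K X v}

/-- `J_0 = K`, `J_1 = V`, and `J_n = ⋂_{i=0}^{l_N(n)−N} V^{⊗i}·R̄·V^{⊗l_N(n)−N−i}` for `n ≥ 2`. -/
noncomputable def Jspace (N : ℕ) (R : Set (F K X)) : ℕ → Submodule K (F K X)
  | 0 => degSub K X 0
  | 1 => degSub K X 1
  | (n + 2) => ⨅ i ∈ Finset.range (lN N (n + 2) - N + 1),
      degSub K X i * Submodule.span K R * degSub K X (lN N (n + 2) - N - i)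

open Classical in
/-- The reduction `r_{u·g·v}` of the presentation `⟨X|R⟩`: the linear endomorphism of `K⟨X⟩`
fixing every word other than `u·lm(g)·v` and sending `u·lm(g)·v` to `u·(lm(g)−g)·v`. -/
noncomputable def redMap (u : FreeMonoid X) (g : F K X) (v : FreeMonoid X) :
    F K X →ₗ[K] F K X :=
  Finsupp.linearCombination K (fun w : FreeMonoid X =>
    if w = u * lm K X g * v then wd K X u * (wd K X (lm K X g) - g) * wd K X v
    else wd K X w) ∘ₗ (MonoidAlgebra.coeffLinearEquiv K).toLinearMap

/-- `f` is a normal form for `⟨X|R⟩` if it is fixed by every reduction. -/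
def IsNormalForm (R : Set (F K X)) (f : F K X) : Prop :=
  ∀ u v : FreeMonoid X, ∀ g ∈ R, redMap K X u g v f = f

/-- `g` is a normal form of `f`: `g` is a normal form and is obtained from `f` by applying a
finite sequence of reductions of `⟨X|R⟩`. -/
def NormalFormOf (R : Set (F K X)) (f g : F K X) : Prop :=
  IsNormalForm K X R g ∧
    ∃ L : List (FreeMonoid X × F K X × FreeMonoid X),
      (∀ p ∈ L, p.2.1 ∈ R) ∧
      g = L.foldr (fun p h => redMap K X p.1 p.2.1 p.2.2 h) f

/-- The presentation `⟨X|R⟩` is reduced: for every `f ∈ R`, `lm(f) − f` is a normal form for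
`⟨X|R⟩` and `lm(f)` is a normal form for `⟨X | R∖{f}⟩`. -/
def Reduced (R : Set (F K X)) : Prop :=
  ∀ f ∈ R, IsNormalForm K X R (wd K X (lm K X f) - f) ∧
    IsNormalForm K X (R \ {f}) (wd K X (lm K X f))

/-- `R` consists of `N`-homogeneous elements with leading coefficient `1`. -/
def NHomogLC1 (N : ℕ) (R : Set (F K X)) : Prop :=
  ∀ f ∈ R, f ∈ degSub K X N ∧ f.coeff (lm K X f) = 1

open Classical in
/-- The operator `S` of the presentation `⟨X|R⟩`: the endomorphism of `V^{⊗N}` sending `lm(f)`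
to `lm(f) − f` for every `f ∈ R` and fixing all other words (extended by the identity on words
of other lengths). -/
noncomputable def Sop (R : Set (F K X)) : F K X →ₗ[K] F K X :=
  Finsupp.linearCombination K (fun w : FreeMonoid X =>
    if h : ∃ f ∈ R, lm K X f = w then wd K X w - h.choose else wd K X w) ∘ₗ
      (MonoidAlgebra.coeffLinearEquiv K).toLinearMap

/-- `S ⊗ id_{V^{⊗b}}` realized on `K⟨X⟩`: on a word of length `a + b`, apply `S` to the first
`a` letters and the identity to the last `b` letters; the identity on all other words. -/
noncomputable def applyLeft (S : F K X →ₗ[K] F K X) (a b : ℕ) : F K X →ₗ[K] F K X :=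
  Finsupp.linearCombination K (fun w : FreeMonoid X =>
    if wlen X w = a + b then
      S (wd K X (FreeMonoid.ofList ((FreeMonoid.toList w).take a))) *
        wd K X (FreeMonoid.ofList ((FreeMonoid.toList w).drop a))
    else wd K X w) ∘ₗ (MonoidAlgebra.coeffLinearEquiv K).toLinearMap

/-- `id_{V^{⊗a}} ⊗ S` realized on `K⟨X⟩`: on a word of length `a + b`, apply the identity to
the first `a` letters and `S` to the last `b` letters; the identity on all other words. -/
noncomputable def applyRight (S : F K X →ₗ[K] F K X) (a b : ℕ) : F K X →ₗ[K] F K X :=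
  Finsupp.linearCombination K (fun w : FreeMonoid X =>
    if wlen X w = a + b then
      wd K X (FreeMonoid.ofList ((FreeMonoid.toList w).take a)) *
        S (wd K X (FreeMonoid.ofList ((FreeMonoid.toList w).drop a)))
    else wd K X w) ∘ₗ (MonoidAlgebra.coeffLinearEquiv K).toLinearMap

/-- The presentation `⟨X|R⟩` is side-confluent: for every `1 ≤ m ≤ N−1` there exists `k ≥ 1`
with `⟨id_{V^{⊗m}}⊗S, S⊗id_{V^{⊗m}}⟩^k = ⟨S⊗id_{V^{⊗m}}, id_{V^{⊗m}}⊗S⟩^k` on `V^{⊗N+m}`. -/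
def SideConfluent (N : ℕ) (R : Set (F K X)) : Prop :=
  ∀ m : ℕ, 1 ≤ m → m ≤ N - 1 →
    ∃ k : ℕ, 1 ≤ k ∧
      ∀ f ∈ degSub K X (N + m),
        altProd (applyRight K X (Sop K X R) m N) (applyLeft K X (Sop K X R) N m) k f =
          altProd (applyLeft K X (Sop K X R) N m) (applyRight K X (Sop K X R) m N) k f

/-- The extra-condition: `(V^{⊗n}⊗R̄) ∩ (R̄⊗V^{⊗n}) ⊆ V^{⊗n−1}⊗R̄⊗V` for every `2 ≤ n ≤ N−1`. -/
def ExtraCondition (N : ℕ) (R : Set (F K X)) : Prop :=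
  ∀ n : ℕ, 2 ≤ n → n ≤ N - 1 →
    (degSub K X n * Submodule.span K R) ⊓ (Submodule.span K R * degSub K X n) ≤
      degSub K X (n - 1) * Submodule.span K R * degSub K X 1

/-- A reduction operator relative to `X^{(m)}`, realized as a linear endomorphism of `K⟨X⟩`
extended by the identity outside of `V^{⊗m}`: an idempotent operator fixing each word of
length `m` or mapping it to an element of `V^{⊗m}` all of whose monomials are strictly
smaller. -/
structure IsRedOp (m : ℕ) (T : F K X →ₗ[K] F K X) : Prop where
  idem : T ∘ₗ T = T
  le : ∀ w : FreeMonoid X, wlen X w = m →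
    T (wd K X w) = wd K X w ∨
      (T (wd K X w) ∈ degSub K X m ∧ ∀ u ∈ (T (wd K X w)).coeff.support, u < w)
  other : ∀ w : FreeMonoid X, wlen X w ≠ m → T (wd K X w) = wd K X w

/-- The kernel `I(R)_{m−l_N(n)} ⊗ V^{⊗l_N(n)}` of the reduction operator `F_1^{n,m}`. -/
noncomputable def ker1 (N : ℕ) (R : Set (F K X)) (n m : ℕ) : Submodule K (F K X) :=
  idealPiece K X N R (m - lN N n) * degSub K X (lN N n)

/-- The kernel of the reduction operator `F_2^{n,m}`: `⊥` if `m < l_N(n+1)` (so that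
`F_2^{n,m} = id`), and `V^{⊗m−l_N(n+1)} ⊗ J_{n+1}` otherwise. -/
noncomputable def ker2 (N : ℕ) (R : Set (F K X)) (n m : ℕ) : Submodule K (F K X) :=
  if m < lN N (n + 1) then ⊥
  else degSub K X (m - lN N (n + 1)) * Jspace K X N R (n + 1)

/-- The span of the normal words of length `d`, i.e. `φ(V^{⊗d})` where `φ` is the
normal-form map. -/
noncomputable def nfSub (R : Set (F K X)) (d : ℕ) : Submodule K (F K X) :=
  Submodule.span K
    {x | ∃ w : FreeMonoid X, wlen X w = d ∧ IsNormalForm K X R (wd K X w) ∧ x = wd K X w}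

/-- `Γ = (id − T2)·Σ_{i odd, 1 ≤ i ≤ k−1} ⟨T2,T1⟩^i`, the image of the element `γ1` of the
confluence algebra under the `(T1,T2)`-representation. -/
noncomputable def Gamma (T1 T2 : F K X →ₗ[K] F K X) (k : ℕ) : F K X →ₗ[K] F K X :=
  (1 - T2) * ∑ i ∈ (Finset.Icc 1 (k - 1)).filter (fun i => Odd i), altProd T2 T1 i

end CC

/-! Write `p = |w₃| = |w₁|`, so that `w = w₁w₂w₃` has length `N + p` and `p ≤ N - 1`.
If `p ≤ 1` the subword is the prefix `w₁w₂ = lm f`. Otherwise `S ⊗ id` and `id ⊗ S` both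
strictly lower `w` (its prefix `lm f` and suffix `lm g` are reducible) and never raise a word, so
telescoping the two sides of the side-confluence identity at `w` produces an element of
`(R̄ ⊗ V^{⊗p}) ∩ (V^{⊗p} ⊗ R̄)` with leading word `w`. By the extra-condition it lies in
`V^{⊗p-1} ⊗ R̄ ⊗ V`. As `R` is reduced, distinct relations have distinct leading words, so
the leading word of any element of that space is `a · lm f₀ · y` with `|a| = p - 1` and
`f₀ ∈ R`: the subword starting at the `p`-th letter of `w` is `lm f₀`. -/

lemma altProd_one {A : Type*} [Monoid A] (t s : A) : altProd t s 1 = s := by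
  simp [altProd]

lemma altProd_succ {A : Type*} [Monoid A] (t s : A) (n : ℕ) :
    altProd t s (n + 1) = (if Even n then s else t) * altProd t s n := by
  rcases Nat.even_or_odd' n with ⟨j, rfl | rfl⟩
  · have hj : (2 * j + 1) / 2 = j := by omega
    simp [altProd, hj]
  · have hj : (2 * j + 1 + 1) / 2 = j + 1 := by omega
    have hj' : (2 * j + 1) / 2 = j := by omega
    simp [altProd, Nat.even_add_one, hj, hj', pow_succ', mul_assoc]

section Telescoping

variable {A M : Type*} [Ring A] [AddCommGroup M] [Module A M]
  {T U : Module.End A M} {P Q L : Submodule A M}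

/-- Telescoping `x - y` along the steps of the alternating product: each step by `T` contributes
to `P`, and each step by `U` (which only ever acts inside `L`) contributes to `Q ⊓ L`. -/
lemma altProd_apply_mem_and_sub_mem_sup (hT : ∀ z, z - T z ∈ P) (hU : ∀ z, z - U z ∈ Q)
    (hTL : ∀ z ∈ L, T z ∈ L) (hUL : ∀ z ∈ L, U z ∈ L) {x : M} (hx : T x ∈ L) {n : ℕ}
    (hn : 1 ≤ n) : altProd U T n x ∈ L ∧ x - altProd U T n x ∈ P ⊔ (Q ⊓ L) := by
  induction n, hn using Nat.le_induction with
  | base => rw [altProd_one]; exact ⟨hx, Submodule.mem_sup_left (hT x)⟩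
  | succ n _ ih =>
    obtain ⟨hyL, hy⟩ := ih
    set y := altProd U T n x
    rw [altProd_succ, Module.End.mul_apply, ← sub_add_sub_cancel x y]
    split_ifs
    · exact ⟨hTL y hyL, add_mem hy (Submodule.mem_sup_left (hT y))⟩
    · exact ⟨hUL y hyL, add_mem hy
        (Submodule.mem_sup_right ⟨hU y, sub_mem hyL (hUL y hyL)⟩)⟩

/-- Compare the two telescopings of `x - y`, where `y` is the common value of both alternating
products. -/
lemma exists_mem_inf_sub_mem_of_altProd_eq (hT : ∀ z, z - T z ∈ P) (hU : ∀ z, z - U z ∈ Q)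
    (hTL : ∀ z ∈ L, T z ∈ L) (hUL : ∀ z ∈ L, U z ∈ L) {x : M} (hTx : T x ∈ L)
    (hUx : U x ∈ L)
    {k : ℕ} (hk : 1 ≤ k) (heq : altProd U T k x = altProd T U k x) :
    ∃ h ∈ P ⊓ Q, h - x ∈ L := by
  obtain ⟨hyL, hTU⟩ := altProd_apply_mem_and_sub_mem_sup hT hU hTL hUL hTx hk
  obtain ⟨-, hUT⟩ := altProd_apply_mem_and_sub_mem_sup hU hT hUL hTL hUx hk
  rw [← heq] at hUT
  obtain ⟨p, hp, q, ⟨hq, hqL⟩, hpq⟩ := Submodule.mem_sup.mp hTU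
  obtain ⟨q', hq', p', ⟨hp', hp'L⟩, hqp⟩ := Submodule.mem_sup.mp hUT
  refine ⟨p - p', ⟨sub_mem hp hp', ?_⟩, ?_⟩
  · rw [show p - p' = q' - q by linear_combination (norm := abel_nf) hpq - hqp]
    exact sub_mem hq' hq
  · rw [show p - p' - x = -(altProd U T k x) - q - p' by
      linear_combination (norm := abel_nf) hpq]
    exact sub_mem (sub_mem (neg_mem hyL) hqL) hp'L

end Telescoping

lemma List.Lex.append_right_of_length_eq {α : Type*} {r : α → α → Prop} {u v : List α}
    (h : List.Lex r u v) (hl : u.length = v.length) (y : List α) :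
    List.Lex r (u ++ y) (v ++ y) := by
  induction h with
  | nil => simp at hl
  | cons _ ih => exact .cons (ih (by simpa using hl))
  | rel hr => exact .rel hr

namespace CC

variable {K : Type*} [Field K] {X : Type*} [LinearOrder X]

section Words

def wtake (n : ℕ) (v : FreeMonoid X) : FreeMonoid X :=
  FreeMonoid.ofList ((FreeMonoid.toList v).take n)

def wdrop (n : ℕ) (v : FreeMonoid X) : FreeMonoid X :=
  FreeMonoid.ofList ((FreeMonoid.toList v).drop n)

lemma wlen_mul (u v : FreeMonoid X) : wlen X (u * v) = wlen X u + wlen X v := by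
  simp [wlen, FreeMonoid.toList_mul]

lemma wlen_eq_zero {u : FreeMonoid X} : wlen X u = 0 ↔ u = 1 := by
  rw [wlen, List.length_eq_zero_iff, ← FreeMonoid.toList_one, FreeMonoid.toList.injective.eq_iff]

lemma wtake_mul_wdrop (n : ℕ) (v : FreeMonoid X) : wtake n v * wdrop n v = v := by
  apply FreeMonoid.toList.injective
  simp [wtake, wdrop, FreeMonoid.toList_mul]

lemma wlen_wtake {n : ℕ} {v : FreeMonoid X} (h : n ≤ wlen X v) : wlen X (wtake n v) = n := by
  simpa [wlen, wtake] using h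

lemma wlen_wdrop (n : ℕ) (v : FreeMonoid X) : wlen X (wdrop n v) = wlen X v - n := by
  simp [wlen, wdrop]

lemma wdrop_zero (v : FreeMonoid X) : wdrop 0 v = v := rfl

lemma wtake_mul {u : FreeMonoid X} {n : ℕ} (h : wlen X u = n) (v : FreeMonoid X) :
    wtake n (u * v) = u := by
  apply FreeMonoid.toList.injective
  simpa [wtake, FreeMonoid.toList_mul] using List.take_left' h

lemma wdrop_mul {u : FreeMonoid X} {n : ℕ} (h : wlen X u = n) (v : FreeMonoid X) :
    wdrop n (u * v) = v := by
  apply FreeMonoid.toList.injective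
  simpa [wdrop, FreeMonoid.toList_mul] using List.drop_left' h

lemma lt_iff_toList_lt {u v : FreeMonoid X} :
    u < v ↔ FreeMonoid.toList u < FreeMonoid.toList v := by
  rw [lt_iff_le_not_ge, lt_iff_le_not_ge]; exact Iff.rfl

lemma mul_lt_mul_left_word (a : FreeMonoid X) {u v : FreeMonoid X} (h : u < v) :
    a * u < a * v := by
  rw [lt_iff_toList_lt] at h ⊢
  simpa only [FreeMonoid.toList_mul] using List.append_left_lt h

lemma mul_le_mul_left_word (a : FreeMonoid X) {u v : FreeMonoid X} (h : u ≤ v) :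
    a * u ≤ a * v := by
  rcases h.lt_or_eq with h | rfl
  exacts [(mul_lt_mul_left_word a h).le, le_rfl]

lemma mul_lt_mul_right_word {u v : FreeMonoid X} (h : u < v) (hl : wlen X u = wlen X v)
    (y : FreeMonoid X) : u * y < v * y := by
  rw [lt_iff_toList_lt] at h ⊢
  simp only [FreeMonoid.toList_mul]
  exact h.append_right_of_length_eq hl _

lemma mul_le_mul_right_word {u v : FreeMonoid X} (h : u ≤ v) (hl : wlen X u = wlen X v)
    (y : FreeMonoid X) : u * y ≤ v * y := by
  rcases h.lt_or_eq with h | rfl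
  exacts [(mul_lt_mul_right_word h hl y).le, le_rfl]

lemma eq_of_mul_mul_eq {a a' v v' y y' : FreeMonoid X} (ha : wlen X a = wlen X a')
    (hv : wlen X v = wlen X v') (h : a * v * y = a' * v' * y') :
    a = a' ∧ v = v' ∧ y = y' := by
  have hl := congrArg FreeMonoid.toList h
  simp only [FreeMonoid.toList_mul] at hl
  obtain ⟨hav, hy⟩ :=
    List.append_inj hl (by simp only [List.length_append]; exact congr($ha + $hv))
  obtain ⟨ha', hv'⟩ := List.append_inj hav ha
  exact ⟨FreeMonoid.toList.injective ha', FreeMonoid.toList.injective hv',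
    FreeMonoid.toList.injective hy⟩

end Words

section Monomials

lemma wd_eq_single (u : FreeMonoid X) : wd K X u = MonoidAlgebra.single u (1 : K) := rfl

lemma coeff_wd_self (u : FreeMonoid X) : (wd K X u).coeff u = 1 :=
  Finsupp.single_eq_same

lemma support_wd (u : FreeMonoid X) : (wd K X u).coeff.support = {u} :=
  Finsupp.support_single u one_ne_zero

lemma wd_mul (u v : FreeMonoid X) : wd K X (u * v) = wd K X u * wd K X v :=
  map_mul (MonoidAlgebra.of K (FreeMonoid X)) u v

lemma wd_one : wd K X (1 : FreeMonoid X) = 1 :=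
  map_one (MonoidAlgebra.of K (FreeMonoid X))

lemma wd_mem_degSub (u : FreeMonoid X) : wd K X u ∈ degSub K X (wlen X u) := by
  intro v hv
  rw [support_wd, Finset.mem_singleton] at hv
  rw [hv]

lemma linearCombination_comp_coeff_wd (φ : FreeMonoid X → F K X) (u : FreeMonoid X) :
    (Finsupp.linearCombination K φ ∘ₗ (MonoidAlgebra.coeffLinearEquiv K).toLinearMap)
      (wd K X u) = φ u := by
  change Finsupp.linearCombination K φ (Finsupp.single u (1 : K)) = φ u
  rw [Finsupp.linearCombination_single, one_smul]

lemma sum_coeff_smul_wd (z : F K X) : ∑ u ∈ z.coeff.support, z.coeff u • wd K X u = z := by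
  conv_rhs => rw [← MonoidAlgebra.sum_coeff_single z]
  refine Finset.sum_congr rfl fun u _ => ?_
  rw [wd_eq_single, MonoidAlgebra.smul_single, smul_eq_mul, mul_one]

lemma map_mem_of_forall_support {Q : FreeMonoid X → Prop} {P : Submodule K (F K X)}
    (T : F K X →ₗ[K] F K X) (hT : ∀ u, Q u → T (wd K X u) ∈ P)
    {z : F K X} (hz : ∀ u ∈ z.coeff.support, Q u) : T z ∈ P := by
  rw [← sum_coeff_smul_wd z, map_sum]
  exact P.sum_mem fun u hu => by rw [map_smul]; exact P.smul_mem _ (hT u (hz u hu))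

lemma mem_support_mul {z₁ z₂ : F K X} {u : FreeMonoid X}
    (hu : u ∈ (z₁ * z₂).coeff.support) :
    ∃ a ∈ z₁.coeff.support, ∃ b ∈ z₂.coeff.support, a * b = u := by
  classical
  exact Finset.mem_mul.mp (MonoidAlgebra.support_coeff_mul_subset z₁ z₂ hu)

lemma mem_support_wd_mul_wd {a y u : FreeMonoid X} {z : F K X}
    (hu : u ∈ (wd K X a * z * wd K X y).coeff.support) :
    ∃ v ∈ z.coeff.support, a * v * y = u := by
  obtain ⟨b, hb, c, hc, rfl⟩ := mem_support_mul hu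
  obtain ⟨d, hd, v, hv, rfl⟩ := mem_support_mul hb
  rw [support_wd, Finset.mem_singleton] at hc hd
  exact ⟨v, hv, by rw [hd, hc]⟩

lemma coeff_wd_mul_mul_wd (a y : FreeMonoid X) (z : F K X) (v : FreeMonoid X) :
    (wd K X a * z * wd K X y).coeff (a * v * y) = z.coeff v := by
  rw [wd_eq_single, wd_eq_single,
    MonoidAlgebra.coeff_mul_single_eq_coeff_mul _ (fun b _ => mul_left_inj y (b := b)),
    MonoidAlgebra.coeff_single_mul_eq_mul_coeff _ (fun b _ => mul_right_inj a (b := b)),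
    one_mul, mul_one]

lemma degSub_le_span_wd (d : ℕ) :
    degSub K X d ≤ Submodule.span K {x : F K X | ∃ u, wlen X u = d ∧ wd K X u = x} := by
  intro z hz
  rw [← sum_coeff_smul_wd z]
  exact Submodule.sum_mem _ fun u hu =>
    Submodule.smul_mem _ _ (Submodule.subset_span ⟨u, hz u hu, rfl⟩)

end Monomials

section LeadingMonomial

lemma lm_eq_max' {f : F K X} (hf : f ≠ 0) :
    lm K X f = f.coeff.support.max' (Finsupp.support_nonempty_iff.mpr (by simpa using hf)) := by
  rw [lm, ← Finset.coe_max', WithBot.unbotD_coe]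

lemma lm_mem_support {f : F K X} (hf : f ≠ 0) : lm K X f ∈ f.coeff.support := by
  rw [lm_eq_max' hf]; exact Finset.max'_mem _ _

lemma le_lm {f : F K X} {u : FreeMonoid X} (hu : u ∈ f.coeff.support) : u ≤ lm K X f := by
  have hf : f ≠ 0 := by rintro rfl; simp at hu
  rw [lm_eq_max' hf]; exact Finset.le_max' _ _ hu

lemma lm_eq_of_coeff_ne_zero {f : F K X} {u : FreeMonoid X} (h0 : f.coeff u ≠ 0)
    (hle : ∀ v ∈ f.coeff.support, v ≤ u) : lm K X f = u := by
  have hf : f ≠ 0 := by rintro rfl; simp at h0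
  exact le_antisymm (hle _ (lm_mem_support hf)) (le_lm (Finsupp.mem_support_iff.mpr h0))

lemma lm_wd_mul_mul_wd {f : F K X} {n : ℕ} (hf : f ∈ degSub K X n) (hf0 : f ≠ 0)
    (a y : FreeMonoid X) : lm K X (wd K X a * f * wd K X y) = a * lm K X f * y := by
  refine lm_eq_of_coeff_ne_zero ?_ fun u hu => ?_
  · rw [coeff_wd_mul_mul_wd]; exact Finsupp.mem_support_iff.mp (lm_mem_support hf0)
  · obtain ⟨v, hv, rfl⟩ := mem_support_wd_mul_wd hu
    rw [mul_assoc, mul_assoc]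
    exact mul_le_mul_left_word a
      (mul_le_mul_right_word (le_lm hv) (by rw [hf v hv, hf _ (lm_mem_support hf0)]) y)

/-- Distinct leading monomials cannot cancel: the largest one occurring in a combination
survives. -/
lemma exists_lm_eq_of_mem_span {S : Set (F K X)} (hS : Set.InjOn (lm K X) S) (hS0 : 0 ∉ S)
    {h : F K X} (hh : h ∈ Submodule.span K S) (h0 : h ≠ 0) :
    ∃ s ∈ S, lm K X s = lm K X h := by
  classical
  obtain ⟨c, hcS, rfl⟩ := Submodule.mem_span_set.mp hh
  have hne : c.support.Nonempty := by
    rw [Finsupp.support_nonempty_iff]; rintro rfl; simp at h0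
  obtain ⟨s₀, hs₀, hmax⟩ := c.support.exists_max_image (lm K X) hne
  have hne0 : ∀ s ∈ c.support, s ≠ 0 := fun s hs h => hS0 (h ▸ hcS hs)
  refine ⟨s₀, hcS hs₀, (lm_eq_of_coeff_ne_zero ?_ fun u hu => ?_).symm⟩
  · rw [Finsupp.sum, MonoidAlgebra.coeff_sum, Finset.sum_apply',
      Finset.sum_eq_single_of_mem s₀ hs₀ fun s hs hss₀ => ?_]
    · simpa [Finsupp.mem_support_iff.mp hs₀] using
        Finsupp.mem_support_iff.mp (lm_mem_support (hne0 s₀ hs₀))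
    · have hlt : lm K X s < lm K X s₀ :=
        (hmax s hs).lt_of_ne fun he => hss₀ (hS (hcS hs) (hcS hs₀) he)
      have : s.coeff (lm K X s₀) = 0 := by
        by_contra h; exact hlt.not_ge (le_lm (Finsupp.mem_support_iff.mpr h))
      simp [this]
  · rw [Finsupp.sum, MonoidAlgebra.coeff_sum] at hu
    obtain ⟨s, hs, hus⟩ := Finset.mem_biUnion.mp (Finsupp.support_finsetSum hu)
    exact (le_lm (Finsupp.support_smul hus)).trans (hmax s hs)

end LeadingMonomial

variable {N : ℕ} {R : Set (F K X)}

section Presentation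

lemma NHomogLC1.ne_zero (hhom : NHomogLC1 K X N R) {f : F K X} (hf : f ∈ R) : f ≠ 0 := by
  rintro rfl; simpa using (hhom 0 hf).2

lemma NHomogLC1.wlen_lm (hhom : NHomogLC1 K X N R) {f : F K X} (hf : f ∈ R) :
    wlen X (lm K X f) = N :=
  (hhom f hf).1 _ (lm_mem_support (hhom.ne_zero hf))

lemma not_isNormalForm_wd_lm {f : F K X} (hf : f ∈ R) (hf0 : f ≠ 0) :
    ¬ IsNormalForm K X R (wd K X (lm K X f)) := by
  intro hnf
  have hred := hnf 1 1 f hf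
  rw [redMap, linearCombination_comp_coeff_wd, if_pos (by rw [one_mul, mul_one]), wd_one,
    one_mul, mul_one, sub_eq_self] at hred
  exact hf0 hred

lemma Reduced.injOn_lm (hred : Reduced K X R) (hR0 : 0 ∉ R) : Set.InjOn (lm K X) R := by
  intro f hf g hg hfg
  by_contra hne
  have hg' : g ∈ R \ {f} := ⟨hg, fun h => hne (Set.mem_singleton_iff.mp h).symm⟩
  exact not_isNormalForm_wd_lm hg' (fun h => hR0 (h ▸ hg)) (hfg ▸ (hred f hf).2)

open scoped Pointwise in
lemma degSub_mul_span_mul_degSub_le (d e : ℕ) :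
    degSub K X d * Submodule.span K R * degSub K X e ≤ Submodule.span K
      {x | ∃ a f y, wlen X a = d ∧ f ∈ R ∧ wlen X y = e ∧
        wd K X a * f * wd K X y = x} := by
  calc degSub K X d * Submodule.span K R * degSub K X e
      ≤ Submodule.span K {x : F K X | ∃ u, wlen X u = d ∧ wd K X u = x} * Submodule.span K R *
          Submodule.span K {x : F K X | ∃ u, wlen X u = e ∧ wd K X u = x} :=
        mul_le_mul' (mul_le_mul' (degSub_le_span_wd d) le_rfl) (degSub_le_span_wd e)
    _ = Submodule.span K ({x : F K X | ∃ u, wlen X u = d ∧ wd K X u = x} * R *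
          {x : F K X | ∃ u, wlen X u = e ∧ wd K X u = x}) := by
        rw [Submodule.span_mul_span, Submodule.span_mul_span]
    _ ≤ _ := by
        refine Submodule.span_mono ?_
        rintro _ ⟨_, ⟨_, ⟨a, ha, rfl⟩, f, hf, rfl⟩, _, ⟨y, hy, rfl⟩, rfl⟩
        exact ⟨a, f, y, ha, hf, hy, rfl⟩

lemma exists_lm_eq_mul_lm_mul (hhom : NHomogLC1 K X N R) (hred : Reduced K X R) {d e : ℕ}
    {h : F K X} (hh : h ∈ degSub K X d * Submodule.span K R * degSub K X e) (h0 : h ≠ 0) :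
    ∃ a, wlen X a = d ∧ ∃ f ∈ R, ∃ y, lm K X h = a * lm K X f * y := by
  have hR0 : 0 ∉ R := fun h => hhom.ne_zero h rfl
  have hlm : ∀ {a f y}, f ∈ R → lm K X (wd K X a * f * wd K X y) = a * lm K X f * y :=
    fun hf => lm_wd_mul_mul_wd (hhom _ hf).1 (hhom.ne_zero hf) _ _
  set S :=
    {x | ∃ a f y, wlen X a = d ∧ f ∈ R ∧ wlen X y = e ∧ wd K X a * f * wd K X y = x}
  have hinj : Set.InjOn (lm K X) S := by
    rintro _ ⟨a, f, y, ha, hf, -, rfl⟩ _ ⟨a', f', y', ha', hf', -, rfl⟩ he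
    rw [hlm hf, hlm hf'] at he
    obtain ⟨rfl, hff', rfl⟩ := eq_of_mul_mul_eq (ha.trans ha'.symm)
      (by rw [hhom.wlen_lm hf, hhom.wlen_lm hf']) he
    rw [hred.injOn_lm hR0 hf hf' hff']
  have hS0 : 0 ∉ S := by
    rintro ⟨a, f, y, -, hf, -, h⟩
    have := congrArg (fun z : F K X => z.coeff (a * lm K X f * y)) h
    simp only [coeff_wd_mul_mul_wd, (hhom f hf).2] at this
    simp at this
  obtain ⟨_, ⟨a, f, y, ha, hf, -, rfl⟩, hlm_eq⟩ :=
    exists_lm_eq_of_mem_span hinj hS0 (degSub_mul_span_mul_degSub_le d e hh) h0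
  exact ⟨a, ha, f, hf, y, by rw [← hlm_eq, hlm hf]⟩

end Presentation

section Triangular

def below (w : FreeMonoid X) : Submodule K (F K X) where
  carrier := {f | ∀ u ∈ f.coeff.support, u < w}
  add_mem' ha hb u hu := (Finset.mem_union.mp (Finsupp.support_add hu)).elim (ha u) (hb u)
  zero_mem' u hu := by simp at hu
  smul_mem' _ _ hf u hu := hf u (Finsupp.support_smul hu)

lemma lm_eq_of_sub_wd_mem_below {h : F K X} {w : FreeMonoid X}
    (hw : h - wd K X w ∈ below w) : h ≠ 0 ∧ lm K X h = w := by
  have hcoeff : h.coeff w = 1 := by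
    have hz : (h - wd K X w).coeff w = 0 := by
      by_contra hne; exact (hw w (Finsupp.mem_support_iff.mpr hne)).false
    simpa [coeff_wd_self, sub_eq_zero] using hz
  refine ⟨by rintro rfl; simp at hcoeff,
    lm_eq_of_coeff_ne_zero (by simp [hcoeff]) fun u hu => ?_⟩
  rw [← sub_add_cancel h (wd K X w), MonoidAlgebra.coeff_add] at hu
  rcases Finset.mem_union.mp (Finsupp.support_add hu) with hu | hu
  · exact (hw u hu).le
  · rw [support_wd, Finset.mem_singleton] at hu; exact hu.le

def IsTriangular (T : F K X →ₗ[K] F K X) : Prop :=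
  ∀ u, ∀ v ∈ (T (wd K X u)).coeff.support, wlen X v = wlen X u ∧ v ≤ u

lemma IsTriangular.map_mem_below {T : F K X →ₗ[K] F K X} (hT : IsTriangular T)
    {w : FreeMonoid X} {z : F K X} (hz : z ∈ below w) : T z ∈ below w :=
  map_mem_of_forall_support (P := below w) T (fun u hu v hv => (hT u v hv).2.trans_lt hu) hz

lemma Sop_wd_of_exists {u : FreeMonoid X} (hu : ∃ f ∈ R, lm K X f = u) :
    ∃ f ∈ R, lm K X f = u ∧ Sop K X R (wd K X u) = wd K X u - f := by
  classical
  refine ⟨hu.choose, hu.choose_spec.1, hu.choose_spec.2, ?_⟩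
  rw [Sop, linearCombination_comp_coeff_wd, dif_pos hu]

lemma Sop_wd_of_not_exists {u : FreeMonoid X} (hu : ¬ ∃ f ∈ R, lm K X f = u) :
    Sop K X R (wd K X u) = wd K X u := by
  classical
  rw [Sop, linearCombination_comp_coeff_wd, dif_neg hu]

lemma wd_sub_Sop_wd_mem_span (u : FreeMonoid X) :
    wd K X u - Sop K X R (wd K X u) ∈ Submodule.span K R := by
  by_cases hu : ∃ f ∈ R, lm K X f = u
  · obtain ⟨f, hf, -, hS⟩ := Sop_wd_of_exists hu
    rw [hS, sub_sub_cancel]; exact Submodule.subset_span hf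
  · rw [Sop_wd_of_not_exists hu, sub_self]; exact Submodule.zero_mem _

lemma isTriangular_Sop (hhom : NHomogLC1 K X N R) : IsTriangular (Sop K X R) := by
  intro u v hv
  by_cases hu : ∃ f ∈ R, lm K X f = u
  · obtain ⟨f, hf, rfl, hS⟩ := Sop_wd_of_exists hu
    rw [hS, MonoidAlgebra.coeff_sub] at hv
    classical
    rcases Finset.mem_union.mp (Finsupp.support_sub hv) with hv | hv
    · rw [support_wd, Finset.mem_singleton] at hv; exact ⟨congrArg _ hv, hv.le⟩
    · exact ⟨((hhom f hf).1 v hv).trans (hhom.wlen_lm hf).symm, le_lm hv⟩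
  · rw [Sop_wd_of_not_exists hu, support_wd, Finset.mem_singleton] at hv
    exact ⟨congrArg _ hv, hv.le⟩

lemma Sop_wd_mem_below (hhom : NHomogLC1 K X N R) {u : FreeMonoid X}
    (hu : ∃ f ∈ R, lm K X f = u) : Sop K X R (wd K X u) ∈ below u := by
  intro v hv
  refine ((isTriangular_Sop hhom u v hv).2).lt_of_ne ?_
  rintro rfl
  obtain ⟨f, hf, rfl, hS⟩ := Sop_wd_of_exists hu
  simp [hS, coeff_wd_self, (hhom f hf).2] at hv

variable {S : F K X →ₗ[K] F K X} {a b : ℕ}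

lemma applyLeft_wd {v : FreeMonoid X} (hv : wlen X v = a + b) :
    applyLeft K X S a b (wd K X v) = S (wd K X (wtake a v)) * wd K X (wdrop a v) := by
  rw [applyLeft, linearCombination_comp_coeff_wd, if_pos hv]; rfl

lemma applyLeft_wd_of_ne {v : FreeMonoid X} (hv : wlen X v ≠ a + b) :
    applyLeft K X S a b (wd K X v) = wd K X v := by
  rw [applyLeft, linearCombination_comp_coeff_wd, if_neg hv]

lemma applyRight_wd {v : FreeMonoid X} (hv : wlen X v = a + b) :
    applyRight K X S a b (wd K X v) = wd K X (wtake a v) * S (wd K X (wdrop a v)) := by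
  rw [applyRight, linearCombination_comp_coeff_wd, if_pos hv]; rfl

lemma applyRight_wd_of_ne {v : FreeMonoid X} (hv : wlen X v ≠ a + b) :
    applyRight K X S a b (wd K X v) = wd K X v := by
  rw [applyRight, linearCombination_comp_coeff_wd, if_neg hv]

lemma sub_applyLeft_mem {P : Submodule K (F K X)} (hS : ∀ u, wd K X u - S (wd K X u) ∈ P)
    (z : F K X) : z - applyLeft K X S a b z ∈ P * degSub K X b := by
  have := map_mem_of_forall_support (Q := fun _ => True) (LinearMap.id - applyLeft K X S a b)
    (P := P * degSub K X b) (fun v _ => ?_) (z := z) (fun _ _ => trivial)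
  · simpa using this
  by_cases hv : wlen X v = a + b
  · have hd := wd_mem_degSub (K := K) (wdrop a v)
    rw [wlen_wdrop, hv, Nat.add_sub_cancel_left] at hd
    have hsplit : wd K X v = wd K X (wtake a v) * wd K X (wdrop a v) := by
      rw [← wd_mul, wtake_mul_wdrop]
    rw [LinearMap.sub_apply, LinearMap.id_apply, applyLeft_wd hv, hsplit, ← sub_mul]
    exact Submodule.mul_mem_mul (hS _) hd
  · simp [applyLeft_wd_of_ne hv]

lemma sub_applyRight_mem {P : Submodule K (F K X)} (hS : ∀ u, wd K X u - S (wd K X u) ∈ P)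
    (z : F K X) : z - applyRight K X S a b z ∈ degSub K X a * P := by
  have := map_mem_of_forall_support (Q := fun _ => True) (LinearMap.id - applyRight K X S a b)
    (P := degSub K X a * P) (fun v _ => ?_) (z := z) (fun _ _ => trivial)
  · simpa using this
  by_cases hv : wlen X v = a + b
  · have hd := wd_mem_degSub (K := K) (wtake a v)
    rw [wlen_wtake (by omega)] at hd
    have hsplit : wd K X v = wd K X (wtake a v) * wd K X (wdrop a v) := by
      rw [← wd_mul, wtake_mul_wdrop]
    rw [LinearMap.sub_apply, LinearMap.id_apply, applyRight_wd hv, hsplit, ← mul_sub]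
    exact Submodule.mul_mem_mul hd (hS _)
  · simp [applyRight_wd_of_ne hv]

lemma IsTriangular.applyLeft (hS : IsTriangular S) : IsTriangular (applyLeft K X S a b) := by
  intro v u hu
  by_cases hv : wlen X v = a + b
  · rw [applyLeft_wd hv] at hu
    obtain ⟨x, hx, y, hy, rfl⟩ := mem_support_mul hu
    rw [support_wd, Finset.mem_singleton] at hy
    obtain ⟨hxl, hxle⟩ := hS _ x hx
    subst hy
    refine ⟨by rw [wlen_mul, hxl, ← wlen_mul, wtake_mul_wdrop], ?_⟩
    simpa only [wtake_mul_wdrop] using mul_le_mul_right_word hxle hxl (wdrop a v)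
  · rw [applyLeft_wd_of_ne hv, support_wd, Finset.mem_singleton] at hu
    exact ⟨congrArg _ hu, hu.le⟩

lemma IsTriangular.applyRight (hS : IsTriangular S) : IsTriangular (applyRight K X S a b) := by
  intro v u hu
  by_cases hv : wlen X v = a + b
  · rw [applyRight_wd hv] at hu
    obtain ⟨x, hx, y, hy, rfl⟩ := mem_support_mul hu
    rw [support_wd, Finset.mem_singleton] at hx
    obtain ⟨hyl, hyle⟩ := hS _ y hy
    subst hx
    refine ⟨by rw [wlen_mul, hyl, ← wlen_mul, wtake_mul_wdrop], ?_⟩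
    simpa only [wtake_mul_wdrop] using mul_le_mul_left_word (wtake a v) hyle
  · rw [applyRight_wd_of_ne hv, support_wd, Finset.mem_singleton] at hu
    exact ⟨congrArg _ hu, hu.le⟩

lemma applyLeft_wd_mem_below (hS : IsTriangular S) {v : FreeMonoid X} (hv : wlen X v = a + b)
    (hlt : S (wd K X (wtake a v)) ∈ below (wtake a v)) :
    applyLeft K X S a b (wd K X v) ∈ below v := by
  intro u hu
  rw [applyLeft_wd hv] at hu
  obtain ⟨x, hx, y, hy, rfl⟩ := mem_support_mul hu
  rw [support_wd, Finset.mem_singleton] at hy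
  subst hy
  simpa only [wtake_mul_wdrop] using mul_lt_mul_right_word (hlt x hx) (hS _ x hx).1 (wdrop a v)

lemma applyRight_wd_mem_below {v : FreeMonoid X} (hv : wlen X v = a + b)
    (hlt : S (wd K X (wdrop a v)) ∈ below (wdrop a v)) :
    applyRight K X S a b (wd K X v) ∈ below v := by
  intro u hu
  rw [applyRight_wd hv] at hu
  obtain ⟨x, hx, y, hy, rfl⟩ := mem_support_mul hu
  rw [support_wd, Finset.mem_singleton] at hx
  subst hx
  simpa only [wtake_mul_wdrop] using mul_lt_mul_left_word (wtake a v) (hlt y hy)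

end Triangular

lemma exists_mem_inf_sub_wd_mem_below (hhom : NHomogLC1 K X N R) {p : ℕ} {w : FreeMonoid X}
    (hw : wlen X w = N + p) (hL : ∃ f ∈ R, lm K X f = wtake N w)
    (hR : ∃ g ∈ R, lm K X g = wdrop p w) {k : ℕ} (hk : 1 ≤ k)
    (heq : altProd (applyRight K X (Sop K X R) p N) (applyLeft K X (Sop K X R) N p) k (wd K X w) =
      altProd (applyLeft K X (Sop K X R) N p) (applyRight K X (Sop K X R) p N) k (wd K X w)) :
    ∃ h ∈ (Submodule.span K R * degSub K X p) ⊓ (degSub K X p * Submodule.span K R),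
      h - wd K X w ∈ below w :=
  exists_mem_inf_sub_mem_of_altProd_eq (sub_applyLeft_mem wd_sub_Sop_wd_mem_span)
    (sub_applyRight_mem wd_sub_Sop_wd_mem_span)
    (fun _ => (isTriangular_Sop hhom).applyLeft.map_mem_below)
    (fun _ => (isTriangular_Sop hhom).applyRight.map_mem_below)
    (applyLeft_wd_mem_below (isTriangular_Sop hhom) hw (Sop_wd_mem_below hhom hL))
    (applyRight_wd_mem_below (by omega) (Sop_wd_mem_below hhom hR)) hk heq

end CC

open CC in
theorem stmt6_general (K : Type*) [Field K] (X : Type*) [LinearOrder X]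
    (N : ℕ) (R : Set (F K X))
    (hhom : NHomogLC1 K X N R) (hred : Reduced K X R)
    (hside : SideConfluent K X N R) (hec : ExtraCondition K X N R)
    (w1 w2 w3 : FreeMonoid X) (f g : F K X)
    (hf : f ∈ R) (hg : g ∈ R)
    (hw2 : w2 ≠ 1)
    (hfw : w1 * w2 = lm K X f) (hgw : w2 * w3 = lm K X g) :
    ¬ IsNormalForm K X R
      (wd K X (FreeMonoid.ofList
        (((FreeMonoid.toList (w1 * w2 * w3)).drop (wlen X (w1 * w2 * w3) - N - 1)).take N))) := by
  set w := w1 * w2 * w3 with hw_def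
  change ¬ IsNormalForm K X R (wd K X (wtake N (wdrop (wlen X w - N - 1) w)))
  have h12 : wlen X (w1 * w2) = N := hfw ▸ hhom.wlen_lm hf
  have h23 : wlen X (w2 * w3) = N := hgw ▸ hhom.wlen_lm hg
  have h2 : wlen X w2 ≠ 0 := mt wlen_eq_zero.mp hw2
  have hw : wlen X w = N + wlen X w3 := by rw [hw_def, wlen_mul, h12]
  rw [wlen_mul] at h12 h23
  rcases le_or_gt (wlen X w3) 1 with hp | hp
  · rw [show wlen X w - N - 1 = 0 by omega, wdrop_zero, wtake_mul (by rw [wlen_mul]; omega), hfw]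
    exact not_isNormalForm_wd_lm hf (hhom.ne_zero hf)
  · obtain ⟨k, hk, hconf⟩ := hside _ (by omega) (show wlen X w3 ≤ N - 1 by omega)
    have hL : ∃ f ∈ R, lm K X f = wtake N w :=
      ⟨f, hf, by rw [wtake_mul (by rw [wlen_mul]; omega), hfw]⟩
    have hR : ∃ g ∈ R, lm K X g = wdrop (wlen X w3) w :=
      ⟨g, hg, by rw [hw_def, mul_assoc, wdrop_mul (by omega), hgw]⟩
    obtain ⟨h, hmem, hlow⟩ :=
      exists_mem_inf_sub_wd_mem_below hhom hw hL hR hk (hconf _ (hw ▸ wd_mem_degSub w))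
    obtain ⟨h0, hlm⟩ := lm_eq_of_sub_wd_mem_below hlow
    obtain ⟨a, ha, f₀, hf₀, y, hy⟩ :=
      exists_lm_eq_mul_lm_mul hhom hred (hec _ hp (by omega) ⟨hmem.2, hmem.1⟩) h0
    rw [show wlen X w - N - 1 = wlen X a by omega, ← hlm, hy, mul_assoc, wdrop_mul rfl,
      wtake_mul (hhom.wlen_lm hf₀)]
    exact not_isNormalForm_wd_lm hf₀ (hhom.ne_zero hf₀)

open CC in
/-- Suppose the reduced `N`-homogeneous presentation `⟨X|R⟩` is
extra-confluent (side-confluent and the extra-condition holds, `X` finite).  Let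
`w = w₁w₂w₃ = x_1⋯x_m` be the source of a critical branching `(w₁,w₂,w₃,f,g)` of `⟨X|R⟩`.
Then the length-`N` subword `x_{m−N}⋯x_{m−1}` of `w` is not a normal form for `⟨X|R⟩`. -/
theorem stmt6 (K : Type*) [Field K] (X : Type*) [Fintype X] [LinearOrder X]
    (N : ℕ) (hN : 2 ≤ N) (R : Set (F K X))
    (hhom : NHomogLC1 K X N R) (hred : Reduced K X R)
    (hside : SideConfluent K X N R) (hec : ExtraCondition K X N R)
    (w1 w2 w3 : FreeMonoid X) (f g : F K X)
    (hf : f ∈ R) (hg : g ∈ R)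
    (hw1 : w1 ≠ 1) (hw2 : w2 ≠ 1) (hw3 : w3 ≠ 1)
    (hfw : w1 * w2 = lm K X f) (hgw : w2 * w3 = lm K X g) :
    ¬ IsNormalForm K X R
      (wd K X (FreeMonoid.ofList
        (((FreeMonoid.toList (w1 * w2 * w3)).drop (wlen X (w1 * w2 * w3) - N - 1)).take N))) :=
  stmt6_general K X N R hhom hred hside hec w1 w2 w3 f g hf hg hw2 hfw hgw
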